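/- Let B be an infinite-dimensional Banach space with a Banach frame Φ = (φ_λ)_{λ∈Λ} over a σ-compact index space Λ, with admissible Banach space 𝔅 and finite upper frame bound. Then the strong complement property constant σ_Φ equals 0: for every ε > 0 there exist S ⊆ Λ and unit vectors u, v ∈ B with ‖(φ_λ(u))_{λ∈S}‖_𝔅 ≤ ε and ‖(φ_λ(v))_{λ∈Λ\S}‖_𝔅 ≤ ε. Consequently phase retrieval is never uniformly stable in infinite dimensions. -/

import Mathlib

/-!
Choose a unit vector `v` and approximate its coefficient family by a family supported on a
compact set `S`; then the coefficients of `v` off `S` are small. On the other hand, the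
functionals `φ_λ` with `λ ∈ S` form a compact subset of the dual, so they are uniformly close to
finitely many of them, and in infinite dimensions some unit vector `u` is annihilated by those
finitely many; hence all coefficients of `u` on `S` are small. Thus neither `Φ_S` nor `Φ_{Λ \ S}`
has a large lower frame bound.
-/

open scoped BigOperators

/-- An admissible Banach space `E` of `K`-valued families over `Λ`, given by a linear
embedding into `Λ → K`, which is solid, norm-determined by absolute values, contains
indicators of compact sets, and in which compactly supported elements are dense. -/
structure AdmissibleEmbedding (K : Type) [RCLike K] (Λ : Type) [TopologicalSpace Λ]
    (E : Type) [NormedAddCommGroup E] [NormedSpace K E] where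
  emb : E →ₗ[K] (Λ → K)
  inj : Function.Injective emb
  solid_exists : ∀ (w : Λ → K) (z : E), (∀ l, ‖w l‖ ≤ ‖emb z l‖) →
    ∃ w' : E, emb w' = w ∧ ‖w'‖ ≤ ‖z‖
  norm_abs : ∀ w w' : E, (∀ l, ‖emb w l‖ = ‖emb w' l‖) → ‖w‖ = ‖w'‖
  indicator_mem : ∀ Λ' : Set Λ, IsCompact Λ' → ∃ e : E, emb e = Λ'.indicator (fun _ => (1 : K))
  dense_compact : Dense {e : E | ∃ Λ' : Set Λ, IsCompact Λ' ∧ ∀ l, l ∉ Λ' → emb e l = 0}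

/-- A Banach frame `Φ = (φ_λ)` for `B` with associated admissible space `E`:
frame inequalities, a continuous reconstruction operator, and distinguished elements of `E`
representing the coefficient family, the phaseless coefficient family, and restricted
coefficient families. -/
structure BanachFramePR (K : Type) [RCLike K] (Λ : Type) [TopologicalSpace Λ]
    (B : Type) [NormedAddCommGroup B] [NormedSpace K B]
    (E : Type) [NormedAddCommGroup E] [NormedSpace K E]
    (adm : AdmissibleEmbedding K Λ E) where
  Φ : Λ → (B →L[K] K)
  contΦ : Continuous Φ
  coeff : B → E
  coeff_spec : ∀ x l, adm.emb (coeff x) l = Φ l x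
  absCoeff : B → E
  absCoeff_spec : ∀ x l, adm.emb (absCoeff x) l = (‖Φ l x‖ : K)
  restrict : Set Λ → B → E
  restrict_spec : ∀ (S : Set Λ) x l, adm.emb (restrict S x) l = S.indicator (fun l => Φ l x) l
  A : ℝ
  C : ℝ
  hA : 0 < A
  hAC : A ≤ C
  lower : ∀ x, A * ‖x‖ ≤ ‖coeff x‖
  upper : ∀ x, ‖coeff x‖ ≤ C * ‖x‖
  recon : E → B
  recon_cont : Continuous recon
  recon_left : ∀ x, recon (coeff x) = x

/-- The quotient distance `d(x,y) = inf_{|τ|=1} ‖x - τ • y‖`. -/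
noncomputable def phaseDist (K : Type) [RCLike K] {B : Type} [NormedAddCommGroup B]
    [NormedSpace K B] (x y : B) : ℝ :=
  sInf {r : ℝ | ∃ τ : K, ‖τ‖ = 1 ∧ r = ‖x - τ • y‖}

section InfiniteDimensional

variable {K B : Type*} [RCLike K] [NormedAddCommGroup B] [NormedSpace K B]

theorem exists_norm_eq_one_forall_apply_eq_zero (hB : ¬ FiniteDimensional K B)
    {t : Set (B →L[K] K)} (ht : t.Finite) : ∃ u : B, ‖u‖ = 1 ∧ ∀ ψ ∈ t, ψ u = 0 := by
  have := ht.fintype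
  let L : B →ₗ[K] (t → K) := LinearMap.pi fun ψ : t => (ψ.1 : B →ₗ[K] K)
  have hker : LinearMap.ker L ≠ ⊥ := fun h =>
    hB (FiniteDimensional.of_injective L (LinearMap.ker_eq_bot.mp h))
  obtain ⟨u, hu, hu0⟩ := Submodule.exists_mem_ne_zero_of_ne_bot hker
  refine ⟨((‖u‖ : K))⁻¹ • u, norm_smul_inv_norm hu0, fun ψ hψ => ?_⟩
  have : ψ u = 0 := congrFun (LinearMap.mem_ker.mp hu) ⟨ψ, hψ⟩
  rw [map_smul, this, smul_zero]

theorem IsCompact.exists_norm_eq_one_forall_norm_apply_le (hB : ¬ FiniteDimensional K B)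
    {s : Set (B →L[K] K)} (hs : IsCompact s) {δ : ℝ} (hδ : 0 < δ) :
    ∃ u : B, ‖u‖ = 1 ∧ ∀ φ ∈ s, ‖φ u‖ ≤ δ := by
  obtain ⟨t, -, ht, hcover⟩ := hs.finite_cover_balls hδ
  obtain ⟨u, hu, hut⟩ := exists_norm_eq_one_forall_apply_eq_zero hB ht
  refine ⟨u, hu, fun φ hφ => ?_⟩
  obtain ⟨ψ, hψ, hφψ⟩ := Set.mem_iUnion₂.mp (hcover hφ)
  calc ‖φ u‖ = ‖(φ - ψ) u‖ := by simp [hut ψ hψ]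
    _ ≤ ‖φ - ψ‖ * ‖u‖ := (φ - ψ).le_opNorm u
    _ ≤ δ := by rw [hu, mul_one, ← dist_eq_norm]; exact (Metric.mem_ball.mp hφψ).le

end InfiniteDimensional

namespace AdmissibleEmbedding

variable {K Λ E : Type} [RCLike K] [TopologicalSpace Λ] [NormedAddCommGroup E] [NormedSpace K E]
  (adm : AdmissibleEmbedding K Λ E)

theorem norm_le_of_forall_norm_le {w z : E} (h : ∀ l, ‖adm.emb w l‖ ≤ ‖adm.emb z l‖) :
    ‖w‖ ≤ ‖z‖ := by
  obtain ⟨w', hw', hnorm⟩ := adm.solid_exists (adm.emb w) z h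
  rwa [adm.inj hw'] at hnorm

end AdmissibleEmbedding

namespace BanachFramePR

variable {K Λ B E : Type} [RCLike K] [TopologicalSpace Λ]
  [NormedAddCommGroup B] [NormedSpace K B] [NormedAddCommGroup E] [NormedSpace K E]
  {adm : AdmissibleEmbedding K Λ E} (F : BanachFramePR K Λ B E adm)

/-- The lower frame bound `A_{Φ_S}` of the restricted family `Φ_S = (φ_λ)_{λ ∈ S}`. -/
noncomputable def restrictLowerBound (S : Set Λ) : ℝ :=
  sSup {a : ℝ | 0 ≤ a ∧ ∀ x : B, a * ‖x‖ ≤ ‖F.restrict S x‖}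

theorem restrictLowerBound_le {S : Set Λ} {u : B} {ε : ℝ} (hu : ‖u‖ = 1)
    (hSu : ‖F.restrict S u‖ ≤ ε) (hε : 0 ≤ ε) : F.restrictLowerBound S ≤ ε := by
  refine Real.sSup_le (fun a ha => ?_) hε
  have := ha.2 u
  rw [hu, mul_one] at this
  exact this.trans hSu

theorem norm_restrict_compl_le_norm_sub {S : Set Λ} {e : E} (he : ∀ l ∉ S, adm.emb e l = 0)
    (x : B) : ‖F.restrict Sᶜ x‖ ≤ ‖F.coeff x - e‖ := by
  refine adm.norm_le_of_forall_norm_le fun l => ?_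
  rw [F.restrict_spec, map_sub, Pi.sub_apply, F.coeff_spec]
  by_cases hl : l ∈ S
  · simp [Set.indicator_of_notMem (Set.notMem_compl_iff.mpr hl)]
  · simp [Set.indicator_of_mem (Set.mem_compl hl), he l hl]

theorem exists_pos_forall_norm_restrict_le {S : Set Λ} (hS : IsCompact S) {ε : ℝ}
    (hε : 0 < ε) : ∃ δ > 0, ∀ x : B, (∀ l ∈ S, ‖F.Φ l x‖ ≤ δ) → ‖F.restrict S x‖ ≤ ε := by
  obtain ⟨eS, heS⟩ := adm.indicator_mem S hS
  have hpos : 0 < ‖eS‖ + 1 := by positivity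
  set δ := ε / (‖eS‖ + 1)
  have hδ : 0 < δ := div_pos hε hpos
  refine ⟨δ, hδ, fun x hx => ?_⟩
  have hdom : ‖F.restrict S x‖ ≤ ‖(δ : K) • eS‖ := by
    refine adm.norm_le_of_forall_norm_le fun l => ?_
    rw [F.restrict_spec, map_smul, Pi.smul_apply, heS, norm_smul, RCLike.norm_ofReal,
      abs_of_pos hδ]
    by_cases hl : l ∈ S
    · simpa [Set.indicator_of_mem hl] using hx l hl
    · simp [Set.indicator_of_notMem hl]
  calc ‖F.restrict S x‖ ≤ δ * ‖eS‖ := by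
        rwa [norm_smul, RCLike.norm_ofReal, abs_of_pos hδ] at hdom
    _ ≤ δ * (‖eS‖ + 1) := by gcongr; linarith
    _ = ε := div_mul_cancel₀ ε hpos.ne'

theorem exists_norm_restrict_le (hinf : ¬ FiniteDimensional K B) {ε : ℝ} (hε : 0 < ε) :
    ∃ (S : Set Λ) (u v : B), ‖u‖ = 1 ∧ ‖v‖ = 1 ∧
      ‖F.restrict S u‖ ≤ ε ∧ ‖F.restrict Sᶜ v‖ ≤ ε := by
  obtain ⟨v, hv, -⟩ := exists_norm_eq_one_forall_apply_eq_zero hinf (t := ∅) Set.finite_empty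
  obtain ⟨e, ⟨S, hS, he⟩, hve⟩ :=
    Metric.mem_closure_iff.mp (adm.dense_compact (F.coeff v)) ε hε
  obtain ⟨δ, hδ, hsmall⟩ := F.exists_pos_forall_norm_restrict_le hS hε
  obtain ⟨u, hu, hΦu⟩ :=
    (hS.image F.contΦ).exists_norm_eq_one_forall_norm_apply_le hinf hδ
  refine ⟨S, u, v, hu, hv, hsmall u fun l hl => hΦu _ ⟨l, hl, rfl⟩, ?_⟩
  exact (F.norm_restrict_compl_le_norm_sub he v).trans
    (by rw [← dist_eq_norm]; exact hve.le)

end BanachFramePR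

theorem stmt_12_general {K Λ B E : Type} [RCLike K] [TopologicalSpace Λ]
    [NormedAddCommGroup B] [NormedSpace K B]
    (hinf : ¬ FiniteDimensional K B)
    [NormedAddCommGroup E] [NormedSpace K E]
    (adm : AdmissibleEmbedding K Λ E) (F : BanachFramePR K Λ B E adm) :
    (sSup {s : ℝ | 0 ≤ s ∧ ∀ S : Set Λ,
        s ≤ max (sSup {a : ℝ | 0 ≤ a ∧ ∀ x : B, a * ‖x‖ ≤ ‖F.restrict S x‖})
                (sSup {a : ℝ | 0 ≤ a ∧ ∀ x : B, a * ‖x‖ ≤ ‖F.restrict Sᶜ x‖})} = 0) ∧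
    (∀ ε : ℝ, 0 < ε → ∃ (S : Set Λ) (u v : B), ‖u‖ = 1 ∧ ‖v‖ = 1 ∧
      ‖F.restrict S u‖ ≤ ε ∧ ‖F.restrict Sᶜ v‖ ≤ ε) := by
  refine ⟨le_antisymm (Real.sSup_le ?_ le_rfl) (Real.sSup_nonneg fun s hs => hs.1),
    fun ε hε => F.exists_norm_restrict_le hinf hε⟩
  rintro s ⟨-, hs⟩
  by_contra! hpos
  obtain ⟨S, u, v, hu, hv, hSu, hSv⟩ := F.exists_norm_restrict_le hinf (half_pos hpos)
  have hσ : s ≤ max (F.restrictLowerBound S) (F.restrictLowerBound Sᶜ) := hs S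
  have := max_le (F.restrictLowerBound_le hu hSu (half_pos hpos).le)
    (F.restrictLowerBound_le hv hSv (half_pos hpos).le)
  linarith

/-- For a Banach frame of an infinite-dimensional Banach space over a σ-compact index
space, the strong complement property constant vanishes: `σ_Φ = 0`, and for every `ε > 0`
there are `S ⊆ Λ` and unit vectors `u, v` whose restricted coefficient families over `S`
and `Λ \ S` respectively have norm at most `ε`. -/
theorem stmt_12 {K Λ B E : Type} [RCLike K] [TopologicalSpace Λ] [SigmaCompactSpace Λ]
    [NormedAddCommGroup B] [NormedSpace K B] [CompleteSpace B]
    (hinf : ¬ FiniteDimensional K B)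
    [NormedAddCommGroup E] [NormedSpace K E] [CompleteSpace E]
    (adm : AdmissibleEmbedding K Λ E) (F : BanachFramePR K Λ B E adm) :
    (sSup {s : ℝ | 0 ≤ s ∧ ∀ S : Set Λ,
        s ≤ max (sSup {a : ℝ | 0 ≤ a ∧ ∀ x : B, a * ‖x‖ ≤ ‖F.restrict S x‖})
                (sSup {a : ℝ | 0 ≤ a ∧ ∀ x : B, a * ‖x‖ ≤ ‖F.restrict Sᶜ x‖})} = 0) ∧
    (∀ ε : ℝ, 0 < ε → ∃ (S : Set Λ) (u v : B), ‖u‖ = 1 ∧ ‖v‖ = 1 ∧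
      ‖F.restrict S u‖ ≤ ε ∧ ‖F.restrict Sᶜ v‖ ≤ ε) :=
  stmt_12_general hinf adm F
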